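/- With the downlink powers ρ = (σ_dl²/σ_ul²) (Γ − Σ)^{-1} (Γ − Σ^T) p, the sum of downlink powers normalized by downlink noise equals the sum of uplink powers normalized by uplink noise: ∑_{i=1}^K ρ_i / σ_dl² = ∑_{i=1}^K p_i / σ_ul². -/

import Mathlib

/-!
With `A = Γ - Σ` we have `Aᵀ = Γ - Σᵀ` because `Γ` is diagonal, so `Aᵀ p = σ_ul² 𝟙`. Pairing `ρ`
with this vector gives `σ_ul² ∑ ρ = (σ_dl²/σ_ul²) pᵀ A A⁻¹ Aᵀ p = (σ_dl²/σ_ul²) pᵀ (σ_ul² 𝟙) = σ_dl² ∑ p`.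
-/

open Matrix Finset

theorem Matrix.transpose_mulVec_dotProduct_nonsing_inv_mulVec {n R : Type*} [Fintype n]
    [DecidableEq n] [CommRing R] {A : Matrix n n R} (hA : IsUnit A.det) (p w : n → R) :
    (Aᵀ *ᵥ p) ⬝ᵥ (A⁻¹ *ᵥ w) = p ⬝ᵥ w := by
  rw [mulVec_transpose, dotProduct_mulVec, vecMul_vecMul, mul_nonsing_inv A hA, vecMul_one]

theorem Matrix.sum_div_eq_sum_div_of_transpose_mulVec_eq_const {n 𝕜 : Type*} [Fintype n]
    [DecidableEq n] [Field 𝕜] {A : Matrix n n 𝕜} (hA : IsUnit A) {σ τ : 𝕜} (hσ : σ ≠ 0)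
    (hτ : τ ≠ 0) {p : n → 𝕜} (hp : Aᵀ *ᵥ p = fun _ => σ) :
    ∑ i, ((τ / σ) • A⁻¹ *ᵥ (Aᵀ *ᵥ p)) i / τ = ∑ i, p i / σ := by
  have hdet : IsUnit A.det := (isUnit_iff_isUnit_det A).mp hA
  have key : σ * ∑ i, ((τ / σ) • A⁻¹ *ᵥ (Aᵀ *ᵥ p)) i = τ * ∑ i, p i := by
    calc σ * ∑ i, ((τ / σ) • A⁻¹ *ᵥ (Aᵀ *ᵥ p)) i
        = (τ / σ) * ((Aᵀ *ᵥ p) ⬝ᵥ (A⁻¹ *ᵥ (Aᵀ *ᵥ p))) := by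
          simp only [Pi.smul_apply, smul_eq_mul, ← mul_sum, hp, dotProduct]
          ring
      _ = (τ / σ) * (p ⬝ᵥ fun _ => σ) := by
          rw [transpose_mulVec_dotProduct_nonsing_inv_mulVec hdet, hp]
      _ = τ * ∑ i, p i := by
          simp only [dotProduct, ← sum_mul]
          field_simp
  rw [← sum_div, ← sum_div, div_eq_div_iff hτ hσ]
  linear_combination key

theorem stmt3_general (K : ℕ) (Γ Sig : Matrix (Fin K) (Fin K) ℝ) (σul2 σdl2 : ℝ)
    (hσul : 0 < σul2) (hσdl : 0 < σdl2)
    (hΓdiag : ∀ i j, i ≠ j → Γ i j = 0)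
    (h1 : IsUnit (Γ - Sig))
    (p : Fin K → ℝ)
    (hp : (Γ - Sig.transpose).mulVec p = fun _ => σul2)
    (ρ : Fin K → ℝ)
    (hρ : ρ = (σdl2 / σul2) • (Γ - Sig)⁻¹.mulVec ((Γ - Sig.transpose).mulVec p)) :
    ∑ i, ρ i / σdl2 = ∑ i, p i / σul2 := by
  have hT : Γ - Sigᵀ = (Γ - Sig)ᵀ := by
    rw [transpose_sub, (show Γ.IsDiag from hΓdiag).isSymm.eq]
  rw [hT] at hp hρ
  subst hρ
  exact sum_div_eq_sum_div_of_transpose_mulVec_eq_const h1 hσul.ne' hσdl.ne' hp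

/-- Uplink–downlink duality, power conservation. If the uplink powers satisfy
`(Γ - Σᵀ) p = 1 σ_ul²` and the downlink powers are chosen as
`ρ = (σ_dl²/σ_ul²) (Γ - Σ)⁻¹ (Γ - Σᵀ) p`, then the total normalized downlink
power equals the total normalized uplink power:
`∑_i ρ_i / σ_dl² = ∑_i p_i / σ_ul²`. -/
theorem stmt3 (K : ℕ) (Γ Sig : Matrix (Fin K) (Fin K) ℝ) (σul2 σdl2 : ℝ)
    (hσul : 0 < σul2) (hσdl : 0 < σdl2)
    (hΓdiag : ∀ i j, i ≠ j → Γ i j = 0) (hΓinv : IsUnit Γ)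
    (h1 : IsUnit (Γ - Sig)) (h2 : IsUnit (Γ - Sig.transpose))
    (p : Fin K → ℝ)
    (hp : (Γ - Sig.transpose).mulVec p = fun _ => σul2)
    (ρ : Fin K → ℝ)
    (hρ : ρ = (σdl2 / σul2) • (Γ - Sig)⁻¹.mulVec ((Γ - Sig.transpose).mulVec p)) :
    ∑ i, ρ i / σdl2 = ∑ i, p i / σul2 :=
  stmt3_general K Γ Sig σul2 σdl2 hσul hσdl hΓdiag h1 p hp ρ hρ
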